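/- Let S_m = ℤ[x₁,…,x_m]/⟨x₁²,…,x_m²⟩ and let α₁, α₂, β₁, β₂ be elements of its degree-2 part with α₁ + α₂ = β₁ + β₂, α₁·α₂ = 0, and β₁·β₂ = 0. If α₁ has at least three nonzero coefficients, then α₂ = 0 and either (β₁ = 0 and β₂ = α₁) or (β₂ = 0 and β₁ = α₁). -/

import Mathlib

/-!
In `S_m` the product `(∑ αᵢ xᵢ) (∑ βᵢ xᵢ)` is `∑_{i<j} (αᵢ βⱼ + αⱼ βᵢ) xᵢ xⱼ`, so it vanishes iff
`αᵢ βⱼ + αⱼ βᵢ = 0` for all `i ≠ j`, and a linear form is determined by its coefficients.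
If `α` is nonzero at three distinct indices `i, j, k`, the relations on the pairs give
`βⱼ (αᵢ βₖ - αₖ βᵢ) = 0` and `αᵢ βₖ + αₖ βᵢ = 0`; since there is no `2`-torsion this forces `β = 0`.
Applied to `(α₁, α₂)` this gives `α₂ = 0`, hence `β₁ + β₂ = α₁`. If `β₁` and `β₂` were both nonzero,
the relations for `(β₁, β₂)` would make `β₁` nonzero wherever `α₁` is, and then `β₂ = 0`.
-/

open MvPolynomial

/-- The defining ideal `⟨x₁²,…,x_m²⟩` of `S_m = H^*((ℂP¹)^m ; ℤ)`. -/
noncomputable def sqIdeal (m : ℕ) : Ideal (MvPolynomial (Fin m) ℤ) :=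
  Ideal.span (Set.range fun i : Fin m => (X i) ^ 2)

section

variable {ι R : Type*} [CommRing R]

def LinearProductVanishes (α β : ι → R) : Prop :=
  ∀ ⦃i j⦄, i ≠ j → α i * β j + α j * β i = 0

namespace LinearProductVanishes

variable [NoZeroDivisors R] {α β β₁ β₂ : ι → R}

theorem apply_ne_zero_of_ne_zero (h : LinearProductVanishes α β) {i l : ι}
    (hl : α l ≠ 0) (hi : β i ≠ 0) : α i ≠ 0 := by
  rcases eq_or_ne l i with rfl | hli
  · exact hl
  · intro hαi
    have eli := h hli
    rw [hαi, zero_mul, add_zero] at eli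
    exact mul_ne_zero hl hi eli

variable [CharZero R]

theorem apply_eq_zero_of_ne_zero_of_ne_zero (h : LinearProductVanishes α β) {i j k : ι}
    (hij : i ≠ j) (hik : i ≠ k) (hjk : j ≠ k) (hi : α i ≠ 0) (hk : α k ≠ 0) : β j = 0 := by
  by_contra hj
  have eij := h hij
  have ejk := h hjk
  have eik := h hik
  have hcross : β j * (α i * β k - α k * β i) = 0 := by
    linear_combination β k * eij - β i * ejk
  have hsym : α i * β k = α k * β i :=
    sub_eq_zero.mp ((mul_eq_zero.mp hcross).resolve_left hj)
  have hβi : β i = 0 := by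
    have h2 : (2 : R) * α k * β i = 0 := by linear_combination eik - hsym
    simpa [hk] using h2
  rw [hβi, mul_zero, add_zero] at eij
  exact hj ((mul_eq_zero.mp eij).resolve_left hi)

theorem eq_zero_of_three_ne_zero (h : LinearProductVanishes α β) {i j k : ι}
    (hij : i ≠ j) (hik : i ≠ k) (hjk : j ≠ k) (hi : α i ≠ 0) (hj : α j ≠ 0) (hk : α k ≠ 0) :
    β = 0 := by
  have hβi : β i = 0 := h.apply_eq_zero_of_ne_zero_of_ne_zero hij.symm hjk hik hj hk
  funext l
  rcases eq_or_ne i l with rfl | hil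
  · exact hβi
  · have eil := h hil
    rw [hβi, mul_zero, add_zero] at eil
    exact (mul_eq_zero.mp eil).resolve_left hi

theorem eq_zero_or_eq_zero_of_add (h : LinearProductVanishes β₁ β₂) {i j k : ι}
    (hij : i ≠ j) (hik : i ≠ k) (hjk : j ≠ k)
    (hi : β₁ i + β₂ i ≠ 0) (hj : β₁ j + β₂ j ≠ 0) (hk : β₁ k + β₂ k ≠ 0) :
    β₁ = 0 ∨ β₂ = 0 := by
  by_contra! hne
  obtain ⟨l, hl⟩ := Function.ne_iff.mp hne.1
  have hβ₁ : ∀ t, β₁ t + β₂ t ≠ 0 → β₁ t ≠ 0 := fun t ht hβ₁t => by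
    rcases eq_or_ne (β₂ t) 0 with hβ₂t | hβ₂t
    · simp [hβ₁t, hβ₂t] at ht
    · exact h.apply_ne_zero_of_ne_zero hl hβ₂t hβ₁t
  exact hne.2 (h.eq_zero_of_three_ne_zero hij hik hjk (hβ₁ i hi) (hβ₁ j hj) (hβ₁ k hk))

end LinearProductVanishes

end

section

variable {σ R : Type*} [Fintype σ] [DecidableEq σ] [CommSemiring R]

theorem coeff_single_sum_C_mul_X (a : σ → R) (i : σ) :
    coeff (Finsupp.single i 1) (∑ j, C (a j) * X j) = a i := by
  simp [coeff_sum, coeff_C_mul, coeff_X, Finsupp.single_left_inj]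

theorem coeff_single_add_single_sum_mul_sum (a b : σ → R) {i j : σ} (hij : i ≠ j) :
    coeff (Finsupp.single i 1 + Finsupp.single j 1)
      ((∑ k, C (a k) * X k) * ∑ k, C (b k) * X k) = a i * b j + a j * b i := by
  have hmon : ∀ k l : σ, Finsupp.single k 1 + Finsupp.single l 1 =
      Finsupp.single i 1 + Finsupp.single j 1 ↔ (k = i ∧ l = j) ∨ (k = j ∧ l = i) := by
    intro k l
    simp [Finsupp.single_add_single_eq_single_add_single one_ne_zero one_ne_zero]
  simp_rw [Finset.sum_mul_sum, C_mul_X_eq_monomial, monomial_mul, coeff_sum, coeff_monomial, hmon]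
  rw [Fintype.sum_eq_add i j hij (fun k hk => by simp [hk.1, hk.2])]
  simp [hij, hij.symm]

end

theorem coeff_eq_zero_of_mem_sqIdeal {m : ℕ} {p : MvPolynomial (Fin m) ℤ} (hp : p ∈ sqIdeal m)
    {d : Fin m →₀ ℕ} (hd : ∀ i, d i < 2) : coeff d p = 0 := by
  have hspan : sqIdeal m = Ideal.span ((fun s => monomial s (1 : ℤ)) ''
      Set.range fun i : Fin m => Finsupp.single i 2) := by
    simp only [sqIdeal, X_pow_eq_monomial, ← Set.range_comp, Function.comp_def]
  rw [hspan, mem_ideal_span_monomial_image] at hp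
  by_contra hne
  obtain ⟨_, ⟨i, rfl⟩, hle⟩ := hp d (mem_support_iff.mpr hne)
  have hi := hle i
  rw [Finsupp.single_eq_same] at hi
  exact (hd i).not_ge hi

theorem coeff_single_eq_of_mk_eq {m : ℕ} {p q : MvPolynomial (Fin m) ℤ}
    (h : Ideal.Quotient.mk (sqIdeal m) p = Ideal.Quotient.mk (sqIdeal m) q) (i : Fin m) :
    coeff (Finsupp.single i 1) p = coeff (Finsupp.single i 1) q := by
  rw [Ideal.Quotient.eq] at h
  have := coeff_eq_zero_of_mem_sqIdeal h (d := Finsupp.single i 1) fun l => by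
    rw [Finsupp.single_apply]; split_ifs <;> omega
  rwa [coeff_sub, sub_eq_zero] at this

theorem linearProductVanishes_of_mk_mul_eq_zero {m : ℕ} {a b : Fin m → ℤ}
    (h : Ideal.Quotient.mk (sqIdeal m) (∑ i, C (a i) * X i) *
      Ideal.Quotient.mk (sqIdeal m) (∑ i, C (b i) * X i) = 0) :
    LinearProductVanishes a b := fun i j hij => by
  rw [← map_mul, Ideal.Quotient.eq_zero_iff_mem] at h
  have hsqfree : ∀ l, (Finsupp.single i 1 + Finsupp.single j 1 : Fin m →₀ ℕ) l < 2 := fun l => by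
    simp only [Finsupp.add_apply, Finsupp.single_apply]
    split_ifs <;> simp_all
  rw [← coeff_single_add_single_sum_mul_sum a b hij, coeff_eq_zero_of_mem_sqIdeal h hsqfree]

/-- Let `α₁, α₂, β₁, β₂` be degree-two elements of `S_m` with `α₁ + α₂ = β₁ + β₂`,
`α₁ α₂ = 0` and `β₁ β₂ = 0`.  If `α₁` has at least three nonzero coefficients, then
`α₂ = 0` and either `β₁ = 0` and `β₂ = α₁`, or `β₂ = 0` and `β₁ = α₁`. -/
theorem stmt18 (m : ℕ) (a₁ a₂ b₁ b₂ : Fin m → ℤ)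
    (hsum : Ideal.Quotient.mk (sqIdeal m) (∑ i : Fin m, C (a₁ i) * X i) +
        Ideal.Quotient.mk (sqIdeal m) (∑ i : Fin m, C (a₂ i) * X i) =
      Ideal.Quotient.mk (sqIdeal m) (∑ i : Fin m, C (b₁ i) * X i) +
        Ideal.Quotient.mk (sqIdeal m) (∑ i : Fin m, C (b₂ i) * X i))
    (ha : Ideal.Quotient.mk (sqIdeal m) (∑ i : Fin m, C (a₁ i) * X i) *
        Ideal.Quotient.mk (sqIdeal m) (∑ i : Fin m, C (a₂ i) * X i) = 0)
    (hb : Ideal.Quotient.mk (sqIdeal m) (∑ i : Fin m, C (b₁ i) * X i) *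
        Ideal.Quotient.mk (sqIdeal m) (∑ i : Fin m, C (b₂ i) * X i) = 0)
    (hthree : 3 ≤ (Finset.univ.filter fun i => a₁ i ≠ 0).card) :
    Ideal.Quotient.mk (sqIdeal m) (∑ i : Fin m, C (a₂ i) * X i) = 0 ∧
      ((Ideal.Quotient.mk (sqIdeal m) (∑ i : Fin m, C (b₁ i) * X i) = 0 ∧
          Ideal.Quotient.mk (sqIdeal m) (∑ i : Fin m, C (b₂ i) * X i) =
            Ideal.Quotient.mk (sqIdeal m) (∑ i : Fin m, C (a₁ i) * X i)) ∨
        (Ideal.Quotient.mk (sqIdeal m) (∑ i : Fin m, C (b₂ i) * X i) = 0 ∧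
          Ideal.Quotient.mk (sqIdeal m) (∑ i : Fin m, C (b₁ i) * X i) =
            Ideal.Quotient.mk (sqIdeal m) (∑ i : Fin m, C (a₁ i) * X i))) := by
  obtain ⟨i, hi, j, hj, k, hk, hij, hik, hjk⟩ := Finset.two_lt_card.mp hthree
  simp only [Finset.mem_filter, Finset.mem_univ, true_and] at hi hj hk
  have hcoeff : a₁ + a₂ = b₁ + b₂ := funext fun l => by
    rw [← map_add, ← map_add] at hsum
    simpa only [Pi.add_apply, coeff_add, coeff_single_sum_C_mul_X] using
      coeff_single_eq_of_mk_eq hsum l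
  have ha₂ : a₂ = 0 :=
    (linearProductVanishes_of_mk_mul_eq_zero ha).eq_zero_of_three_ne_zero hij hik hjk hi hj hk
  subst ha₂
  rw [add_zero] at hcoeff
  subst hcoeff
  refine ⟨by simp, ?_⟩
  rcases (linearProductVanishes_of_mk_mul_eq_zero hb).eq_zero_or_eq_zero_of_add
    hij hik hjk hi hj hk with rfl | rfl
  · exact Or.inl ⟨by simp, by simp⟩
  · exact Or.inr ⟨by simp, by simp⟩
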